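/- arXiv:2306.00101 — 6 statements merged into one kernel-verified Lean document; each statement's English description precedes it below -/
import Mathlib

section
/- Two ultrafilters F and G on ℕ+ are ˜∣-equivalent (i.e., F ˜∣ G and G ˜∣ F) if and only if they contain exactly the same convex sets. -/
/-- The upward closure of `A` for divisibility: `A↑ = {n : ∃ a ∈ A, a ∣ n}`. -/
def upcl (A : Set ℕ+) : Set ℕ+ := {n | ∃ a ∈ A, a ∣ n}

/-- `A ∈ U`: `A` is nonempty and upward closed for divisibility. -/
def memU (A : Set ℕ+) : Prop := A.Nonempty ∧ A = upcl A

/-- `F ˜∣ G`: every nonempty upward closed set in `F` belongs to `G`. -/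
def tdvd (F G : Ultrafilter ℕ+) : Prop := ∀ A : Set ℕ+, A ∈ F → memU A → A ∈ G

/-- A set is convex for divisibility. -/
def convexDvd (A : Set ℕ+) : Prop := ∀ x ∈ A, ∀ y ∈ A, ∀ z : ℕ+, x ∣ z → z ∣ y → z ∈ A

def downcl (A : Set ℕ+) : Set ℕ+ := {n | ∃ a ∈ A, n ∣ a}

lemma key (F G : Ultrafilter ℕ+) (hFG : tdvd F G) (hGF : tdvd G F)
    (A : Set ℕ+) (hA : convexDvd A) (hAF : A ∈ F) : A ∈ G := by
  have hAne : A.Nonempty := Ultrafilter.nonempty_of_mem hAF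
  -- upcl A ∈ G
  have hup : upcl A ∈ G := by
    apply hFG
    · exact F.toFilter.mem_of_superset hAF (fun n hn => ⟨n, hn, dvd_refl n⟩)
    · refine ⟨⟨hAne.choose, hAne.choose, hAne.choose_spec, dvd_refl _⟩, ?_⟩
      ext n
      constructor
      · exact fun hn => ⟨n, hn, dvd_refl n⟩
      · rintro ⟨m, ⟨a, ha, ham⟩, hmn⟩
        exact ⟨a, ha, ham.trans hmn⟩
  -- downcl A ∈ G
  have hdownF : downcl A ∈ F :=
    F.toFilter.mem_of_superset hAF (fun n hn => ⟨n, hn, dvd_refl n⟩)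
  have hdown : downcl A ∈ G := by
    by_contra hc
    have hcomp : (downcl A)ᶜ ∈ G := (Ultrafilter.compl_mem_iff_notMem).mpr hc
    have hmemU : memU (downcl A)ᶜ := by
      refine ⟨Ultrafilter.nonempty_of_mem hcomp, ?_⟩
      ext n
      constructor
      · exact fun hn => ⟨n, hn, dvd_refl n⟩
      · rintro ⟨m, hm, hmn⟩ ⟨a, ha, hna⟩
        exact hm ⟨a, ha, hmn.trans hna⟩
    have := hGF _ hcomp hmemU
    exact (Ultrafilter.compl_mem_iff_notMem).mp this hdownF
  have hinter : upcl A ∩ downcl A ∈ G := G.toFilter.inter_mem hup hdown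
  apply G.toFilter.mem_of_superset hinter
  rintro n ⟨⟨x, hx, hxn⟩, ⟨y, hy, hny⟩⟩
  exact hA x hx y hy n hxn hny

theorem equiv_iff_same_convex (F G : Ultrafilter ℕ+) :
    (tdvd F G ∧ tdvd G F) ↔ (∀ A : Set ℕ+, convexDvd A → (A ∈ F ↔ A ∈ G)) := by
  constructor
  · rintro ⟨h1, h2⟩ A hA
    exact ⟨key F G h1 h2 A hA, key G F h2 h1 A hA⟩
  · intro h
    have conv : ∀ A : Set ℕ+, memU A → convexDvd A := by
      rintro A ⟨-, hup⟩ x hx y hy z hxz hzy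
      rw [hup]; exact ⟨x, hx, hxz⟩
    exact ⟨fun A hAF hU => (h A (conv A hU)).mp hAF,
           fun A hAG hU => (h A (conv A hU)).mpr hAG⟩
end

section
/- Let (F_i)_{i∈I} be a family of ultrafilters on ℕ+ indexed by a linear order I such that F_i ˜∣ F_j whenever i ≤ j, and let W be an ultrafilter on I containing every final segment {j : j ≥ i}. Then the limit ultrafilter G = lim_{i→W} F_i satisfies F_i ˜∣ G for every i ∈ I. -/
theorem limit_upper_bound {I : Type*} [LinearOrder I] (F : I → Ultrafilter ℕ+)
    (hchain : ∀ i j : I, i ≤ j → tdvd (F i) (F j))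
    (W : Ultrafilter I) (hW : ∀ i : I, {j : I | i ≤ j} ∈ W)
    (G : Ultrafilter ℕ+) (hG : ∀ A : Set ℕ+, A ∈ G ↔ {i : I | A ∈ F i} ∈ W) :
    ∀ i : I, tdvd (F i) G := by
  intro i A hA hU
  rw [hG]
  exact Filter.mem_of_superset (hW i) fun j hj => hchain i j hj A hA hU
end

section
/- Let (F_i)_{i∈I} be a ˜∣-chain of ultrafilters on ℕ+ (F_i ˜∣ F_j for i ≤ j in a linear order I), let W be an ultrafilter on I containing all final segments, and let G = lim_{i→W} F_i. Then the upward closed sets in G are exactly the union over i of the upward closed sets in F_i, i.e., G ∩ U = ⋃_{i∈I} (F_i ∩ U). -/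
theorem limit_U_sets {I : Type*} [LinearOrder I] (F : I → Ultrafilter ℕ+)
    (hchain : ∀ i j : I, i ≤ j → tdvd (F i) (F j))
    (W : Ultrafilter I) (hW : ∀ i : I, {j : I | i ≤ j} ∈ W)
    (G : Ultrafilter ℕ+) (hG : ∀ A : Set ℕ+, A ∈ G ↔ {i : I | A ∈ F i} ∈ W) :
    {A : Set ℕ+ | A ∈ G ∧ memU A} = ⋃ i : I, {A : Set ℕ+ | A ∈ F i ∧ memU A} := by
  ext A
  simp only [Set.mem_setOf_eq, Set.mem_iUnion]
  constructor
  · rintro ⟨hAG, hU⟩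
    have h := (hG A).mp hAG
    obtain ⟨i, hi⟩ := (W.nonempty_of_mem h)
    exact ⟨i, hi, hU⟩
  · rintro ⟨i, hAi, hU⟩
    refine ⟨(hG A).mpr ?_, hU⟩
    exact W.sets_of_superset (hW i) (fun j hj => hchain i j hj A hAi hU)
end

section
/- Let (F_i)_{i∈I} be a ˜∣-chain of ultrafilters on ℕ+, W an ultrafilter on I containing all final segments, and G = lim_{i→W} F_i. Then G is a least upper bound of the chain with respect to ˜∣: if H is any ultrafilter with F_i ˜∣ H for all i ∈ I, then G ˜∣ H. -/
theorem limit_least_upper_bound {I : Type*} [LinearOrder I] (F : I → Ultrafilter ℕ+)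
    (hchain : ∀ i j : I, i ≤ j → tdvd (F i) (F j))
    (W : Ultrafilter I) (hW : ∀ i : I, {j : I | i ≤ j} ∈ W)
    (G : Ultrafilter ℕ+) (hG : ∀ A : Set ℕ+, A ∈ G ↔ {i : I | A ∈ F i} ∈ W)
    (H : Ultrafilter ℕ+) (hH : ∀ i : I, tdvd (F i) H) :
    tdvd G H := by
  intro A hA hU
  have hw : {i : I | A ∈ F i} ∈ W := (hG A).mp hA
  obtain ⟨i, hi⟩ := Ultrafilter.nonempty_of_mem hw
  exact hH i A hi hU
end

section
/- Let (F_i)_{i∈I} be a ˜∣-chain of ultrafilters on ℕ+ and let W, W' be two ultrafilters on I each containing all final segments of I. Then the limits G = lim_{i→W} F_i and G' = lim_{i→W'} F_i are ˜∣-equivalent: G ˜∣ G' and G' ˜∣ G. -/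
theorem limits_equivalent {I : Type*} [LinearOrder I] (F : I → Ultrafilter ℕ+)
    (hchain : ∀ i j : I, i ≤ j → tdvd (F i) (F j))
    (W W' : Ultrafilter I)
    (hW : ∀ i : I, {j : I | i ≤ j} ∈ W) (hW' : ∀ i : I, {j : I | i ≤ j} ∈ W')
    (G G' : Ultrafilter ℕ+)
    (hG : ∀ A : Set ℕ+, A ∈ G ↔ {i : I | A ∈ F i} ∈ W)
    (hG' : ∀ A : Set ℕ+, A ∈ G' ↔ {i : I | A ∈ F i} ∈ W') :
    tdvd G G' ∧ tdvd G' G := by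
  have key : ∀ (V V' : Ultrafilter I), (∀ i : I, {j : I | i ≤ j} ∈ V') →
      ∀ (H H' : Ultrafilter ℕ+),
      (∀ A : Set ℕ+, A ∈ H ↔ {i : I | A ∈ F i} ∈ V) →
      (∀ A : Set ℕ+, A ∈ H' ↔ {i : I | A ∈ F i} ∈ V') →
      tdvd H H' := by
    intro V V' hV' H H' hH hH' A hA hAU
    obtain ⟨i, hi⟩ := V.nonempty_of_mem ((hH A).mp hA)
    exact (hH' A).mpr <| Filter.mem_of_superset (hV' i)
      fun j hj => hchain i j hj A hi hAU
  exact ⟨key W W' hW' G G' hG hG', key W' W hW G' G hG' hG⟩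
end

section
/- For ultrafilters F and G on ℕ+, define F·G = {A ⊆ ℕ+ : {n : A/n ∈ G} ∈ F}, where A/n = {a/n : a ∈ A, n ∣ a}. Then G ˜∣ F·G: every nonempty upward closed set in G belongs to F·G. -/
theorem right_tdvd_mul (F G H : Ultrafilter ℕ+)
    (hH : ∀ A : Set ℕ+, A ∈ H ↔ {n : ℕ+ | {m : ℕ+ | n * m ∈ A} ∈ G} ∈ F) :
    tdvd G H := by
  intro A hA hU
  rw [hH]
  have : {n : ℕ+ | {m : ℕ+ | n * m ∈ A} ∈ G} = Set.univ := by
    ext n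
    simp only [Set.mem_setOf_eq, Set.mem_univ, iff_true]
    exact G.sets_of_superset hA (fun m hm => by
      rw [hU.2]; exact ⟨m, hm, ⟨n, mul_comm n m⟩⟩)
  rw [this]
  exact Filter.univ_mem
end
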